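/- arXiv:2012.01310 — 3 statements merged into one kernel-verified Lean document; each statement's English description precedes it below -/
import Mathlib

section
/- Every finitely generated solvable torsion group is finite: if G is a finitely generated group that is solvable and in which every element has finite order, then G is finite. -/
/-!
Even without solvability, every term of the derived series of a finitely generated torsion
group `G` has finite index: if `H = G⁽ⁿ⁾` has finite index, it is finitely generated by Schreier's
lemma, so its abelianization is a finitely generated abelian torsion group, hence finite, and
`G⁽ⁿ⁺¹⁾ = [H, H]` has finite index in `H`. Solvability makes some `G⁽ⁿ⁾` trivial.
-/

theorem Subgroup.finiteIndex_map_subtype {G : Type*} [Group G] {H : Subgroup G} [H.FiniteIndex]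
    (K : Subgroup H) [K.FiniteIndex] : (K.map H.subtype).FiniteIndex :=
  ⟨by rw [Subgroup.index_map_subtype]; exact mul_ne_zero FiniteIndex.index_ne_zero FiniteIndex.index_ne_zero⟩

section

variable {G : Type*} [Group G] [Group.FG G]

theorem Abelianization.finite_of_fg_isMulTorsion (hG : IsMulTorsion G) :
    Finite (Abelianization G) :=
  have : Group.FG (Abelianization G) :=
    Group.fg_of_surjective (f := Abelianization.of) QuotientGroup.mk_surjective
  CommGroup.finite_of_fg_isMulTorsion _
    (hG.of_surjective (f := Abelianization.of) QuotientGroup.mk_surjective)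

theorem commutator_finiteIndex_of_fg_isMulTorsion (hG : IsMulTorsion G) :
    (commutator G).FiniteIndex :=
  have : Finite (G ⧸ commutator G) := Abelianization.finite_of_fg_isMulTorsion hG
  Subgroup.finiteIndex_of_finite_quotient

theorem derivedSeries_finiteIndex_of_fg_isMulTorsion (hG : IsMulTorsion G) (n : ℕ) :
    (derivedSeries G n).FiniteIndex := by
  induction n with
  | zero => rw [derivedSeries_zero]; infer_instance
  | succ n ih =>
    set H := derivedSeries G n
    have : (commutator H).FiniteIndex := commutator_finiteIndex_of_fg_isMulTorsion (hG.subgroup H)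
    rw [derivedSeries_succ, ← H.map_subtype_commutator]
    exact Subgroup.finiteIndex_map_subtype _

end

/-- Every finitely generated solvable torsion group is finite. -/
theorem fg_solvable_torsion_group_finite (G : Type*) [Group G] [Group.FG G]
    [Group.IsSolvable G] (hG : ∀ g : G, IsOfFinOrder g) : Finite G := by
  obtain ⟨n, hn⟩ := Group.IsSolvable.solvable (G := G)
  have hbot := derivedSeries_finiteIndex_of_fg_isMulTorsion hG n
  rw [hn] at hbot
  exact Nat.finite_of_card_ne_zero (Subgroup.index_bot (G := G) ▸ hbot.index_ne_zero)
end

section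
/- Every solvable normal subgroup of a nonabelian free group is trivial: if N is a normal subgroup of the free group on two generators and N is solvable, then N is the trivial subgroup. -/
/-!
If `N ≠ ⊥` is solvable, the last nontrivial term of its derived series is abelian and
characteristic in `N`, hence normal in the free group `F`; so it suffices that `F` has no nontrivial
abelian normal subgroup `A`. By Nielsen–Schreier `A` is free, and an abelian free group is cyclic,
say `A = ⟨w⟩`. Conjugation acts on `⟨w⟩ ≅ ℤ` by `±1`, so the squares `a²`, `b²` of the generators
commute with `w`. Again by Nielsen–Schreier `⟨a², w⟩` and `⟨b², w⟩` are cyclic, so nontrivial powers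
of `a` and of `b` are powers of `w`, and a nontrivial power of `a` equals a power of `b`: the
abelianization `F → ℤ²` rules this out.
-/

open Subgroup

theorem Subgroup.eq_bot_of_isSolvable {G : Type*} [Group G]
    (hG : ∀ A : Subgroup G, A.Normal → IsMulCommutative A → A = ⊥)
    (N : Subgroup G) [N.Normal] [Group.IsSolvable N] : N = ⊥ := by
  obtain ⟨n, hn⟩ := Group.IsSolvable.solvable (G := N)
  suffices ∀ k, derivedSeries N k = ⊥ → N = ⊥ from this n hn
  intro k
  induction k with
  | zero => simp [Subgroup.eq_bot_iff_forall]
  | succ k ih =>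
    intro hk
    apply ih
    have : IsMulCommutative (derivedSeries N k) := by
      rw [← le_centralizer_iff_isMulCommutative, ← commutator_eq_bot_iff_le_centralizer,
        ← derivedSeries_succ, hk]
    rw [← map_eq_bot_iff_of_injective _ N.subtype_injective]
    exact hG _ inferInstance inferInstance

theorem commute_sq_of_normal_zpowers {G : Type*} [Group G] [IsMulTorsionFree G] {w : G}
    (hw : w ≠ 1) (hnormal : (zpowers w).Normal) (g : G) : Commute (g ^ 2) w := by
  have hconj (h : G) : ∃ k : ℤ, h * w * h⁻¹ = w ^ k :=
    (mem_zpowers_iff.mp (hnormal.conj_mem w (mem_zpowers w) h)).imp fun _ => Eq.symm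
  obtain ⟨k, hk⟩ := hconj g
  obtain ⟨l, hl⟩ := hconj g⁻¹
  rw [inv_inv] at hl
  have hkl : w ^ (k * l) = w ^ (1 : ℤ) := by
    calc w ^ (k * l) = (g * w * g⁻¹) ^ l := by rw [zpow_mul, hk]
      _ = w := by rw [conj_zpow, ← hl]; group
      _ = w ^ (1 : ℤ) := (zpow_one w).symm
  have hk2 : k * k = 1 := by
    have := injective_zpow_iff_not_isOfFinOrder.mpr (by rwa [isOfFinOrder_iff_eq_one]) hkl
    rcases Int.eq_one_or_neg_one_of_mul_eq_one this with rfl | rfl <;> rfl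
  calc g ^ 2 * w = g * (g * w * g⁻¹) * g⁻¹ * g ^ 2 := by rw [sq]; group
    _ = w ^ (k * k) * g ^ 2 := by rw [hk, ← conj_zpow, hk, ← zpow_mul]
    _ = w * g ^ 2 := by rw [hk2, zpow_one]

namespace FreeGroup

variable {α : Type*}

theorem of_mul_of_ne_of_mul_of {s t : α} (hst : s ≠ t) : of s * of t ≠ of t * of s := by
  classical
  intro h
  have := congrArg (lift fun x => if x = s then Equiv.swap (0 : Fin 3) 1 else Equiv.swap 1 2) h
  simp [hst.symm] at this
  exact absurd this (by decide)

theorem eq_zero_of_zpow_of_eq_zpow_of {a b : α} (hab : a ≠ b) {i j : ℤ}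
    (h : of a ^ i = of b ^ j) : i = 0 := by
  classical
  have := congrArg (lift fun x => if x = a then Multiplicative.ofAdd (1 : ℤ) else 1) h
  simpa [hab.symm] using this

theorem isCyclic_of_isMulCommutative [IsMulCommutative (FreeGroup α)] : IsCyclic (FreeGroup α) := by
  have : Subsingleton α :=
    ⟨fun s t => by_contra fun hst => of_mul_of_ne_of_mul_of hst (mul_comm' _ _)⟩
  cases isEmpty_or_nonempty α
  · infer_instance
  · have := uniqueOfSubsingleton (Classical.arbitrary α)
    infer_instance

end FreeGroup

theorem IsFreeGroup.isCyclic_of_isMulCommutative (G : Type*) [Group G] [IsFreeGroup G]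
    [IsMulCommutative G] : IsCyclic G := by
  have : IsMulCommutative (FreeGroup (Generators G)) :=
    .of_comm fun a b => (toFreeGroup G).symm.injective (by simp only [map_mul, mul_comm'])
  exact (toFreeGroup G).isCyclic.mpr FreeGroup.isCyclic_of_isMulCommutative

namespace FreeGroup

variable {α : Type*}

theorem exists_zpow_eq_zpow_of_commute {x y : FreeGroup α} (h : Commute x y) (hy : y ≠ 1) :
    ∃ m n : ℤ, m ≠ 0 ∧ x ^ m = y ^ n := by
  have := isMulCommutative_closure (k := {x, y}) (by
    rintro _ (rfl | rfl) _ (rfl | rfl) <;> first | rfl | exact h.eq | exact h.symm.eq)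
  obtain ⟨u, hu⟩ := (closure {x, y}).isCyclic_iff_exists_zpowers_eq_top.mp
    (IsFreeGroup.isCyclic_of_isMulCommutative _)
  obtain ⟨p, rfl⟩ := mem_zpowers_iff.mp (hu ▸ subset_closure (by simp) : x ∈ zpowers u)
  obtain ⟨q, rfl⟩ := mem_zpowers_iff.mp (hu ▸ subset_closure (by simp) : y ∈ zpowers u)
  refine ⟨q, p, fun hq => hy (by simp [hq]), ?_⟩
  rw [← zpow_mul, ← zpow_mul, mul_comm]

theorem eq_bot_of_normal_of_isMulCommutative {a b : α} (hab : a ≠ b)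
    (A : Subgroup (FreeGroup α)) [hnormal : A.Normal] [IsMulCommutative A] : A = ⊥ := by
  obtain ⟨w, rfl⟩ :=
    A.isCyclic_iff_exists_zpowers_eq_top.mp (IsFreeGroup.isCyclic_of_isMulCommutative A)
  by_contra hA
  have hw : w ≠ 1 := fun h => hA (by rw [h, zpowers_one_eq_bot])
  have hsq (c : α) : ∃ m n : ℤ, m ≠ 0 ∧ of c ^ (2 * m) = w ^ n := by
    obtain ⟨m, n, hm, h⟩ :=
      exists_zpow_eq_zpow_of_commute (commute_sq_of_normal_zpowers hw hnormal (of c)) hw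
    exact ⟨m, n, hm, by rw [zpow_mul, zpow_two, ← sq, h]⟩
  obtain ⟨m, n, hm, ha⟩ := hsq a
  obtain ⟨m', n', hm', hb⟩ := hsq b
  have hab' : of a ^ (2 * m * n') = of b ^ (2 * m' * n) := by
    rw [zpow_mul, ha, zpow_mul, hb, ← zpow_mul, ← zpow_mul, mul_comm]
  have hn' : n' = 0 := by simpa [hm] using eq_zero_of_zpow_of_eq_zpow_of hab hab'
  have hb' : of b ^ (2 * m') = of a ^ (0 : ℤ) := by rw [hb, hn', zpow_zero, zpow_zero]
  exact hm' (by simpa using eq_zero_of_zpow_of_eq_zpow_of hab.symm hb')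

end FreeGroup

/-- Every solvable normal subgroup of a nonabelian free group is trivial: a normal,
solvable subgroup of the free group on two generators is the trivial subgroup. -/
theorem solvable_normal_subgroup_of_free_group_trivial
    (N : Subgroup (FreeGroup (Fin 2))) (hN : N.Normal) (hs : IsSolvable N) :
    N = ⊥ := by
  have : Group.IsSolvable N := hs
  exact N.eq_bot_of_isSolvable fun A _ _ =>
    FreeGroup.eq_bot_of_normal_of_isMulCommutative (by decide : (0 : Fin 2) ≠ 1) A
end

section
/- Let f : H → G be a surjective group homomorphism with solvable kernel. Then H contains a nonabelian free subgroup if and only if G contains a nonabelian free subgroup. -/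
/-!
A solvable subgroup of a free group is free (Nielsen–Schreier) of rank at most one, since a
free group of rank two maps onto the non-solvable group `S₅`; hence it is cyclic. A normal
cyclic subgroup `⟨u⟩` of a free group is central, because conjugation acts on it by
`u ↦ u^{±1}` and free groups have unique roots; and the centre of a nonabelian free group is
trivial. So a solvable
normal subgroup of `F₂` is trivial. Given an embedding `F₂ → H`, its composite with `f` has a
kernel embedding into the solvable group `ker f`, hence is again an embedding. Conversely,
generators of a free subgroup of `G` lift along the surjection `f` to generators of one of `H`.
-/

open Subgroup

namespace FreeGroup

variable {α : Type*}

theorem not_isSolvable [Nontrivial α] : ¬ Group.IsSolvable (FreeGroup α) := by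
  classical
  obtain ⟨s, t, hst⟩ := exists_pair_ne α
  let φ : FreeGroup α →* Equiv.Perm (Fin 5) :=
    FreeGroup.lift fun a => if a = s then finRotate 5 else if a = t then Equiv.swap 0 1 else 1
  have hφ : Function.Surjective φ := by
    rw [← MonoidHom.range_eq_top, eq_top_iff,
      ← Equiv.Perm.closure_cycle_adjacent_swap isCycle_finRotate support_finRotate 0,
      closure_le, Set.insert_subset_iff, Set.singleton_subset_iff]
    exact ⟨⟨of s, by simp [φ]⟩, ⟨of t, by simp [φ, hst.symm]⟩⟩
  exact fun _ => Equiv.Perm.not_isSolvable_fin_5 (Group.isSolvable_of_surjective hφ)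

end FreeGroup

namespace IsFreeGroup

variable {G : Type*} [Group G] [IsFreeGroup G]

theorem isCyclic_of_isSolvable [Group.IsSolvable G] : IsCyclic G := by
  let e := IsFreeGroup.toFreeGroup G
  have : Subsingleton (Generators G) := by
    by_contra h
    rw [not_subsingleton_iff_nontrivial] at h
    exact FreeGroup.not_isSolvable
      (Group.isSolvable_of_surjective (f := e.toMonoidHom) e.surjective)
  rcases isEmpty_or_nonempty (Generators G) with _ | ⟨⟨s⟩⟩
  · exact isCyclic_of_surjective e.symm e.symm.surjective
  · have := uniqueOfSubsingleton s
    exact isCyclic_of_surjective e.symm e.symm.surjective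

theorem exists_zpowers_eq_of_isSolvable (K : Subgroup G) [Group.IsSolvable K] :
    ∃ t : G, zpowers t = K :=
  K.isCyclic_iff_exists_zpowers_eq_top.mp isCyclic_of_isSolvable

theorem exists_mem_zpowers_of_commute {x y : G} (h : Commute x y) :
    ∃ t : G, x ∈ zpowers t ∧ y ∈ zpowers t := by
  have : IsMulCommutative (closure {x, y}) :=
    isMulCommutative_closure (by
      rintro a (rfl | rfl) b (rfl | rfl) <;> first | rfl | exact h.eq | exact h.symm.eq)
  have : Group.IsSolvable (closure {x, y}) := Group.isSolvable_of_comm mul_comm'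
  obtain ⟨t, ht⟩ := exists_zpowers_eq_of_isSolvable (closure {x, y})
  exact ⟨t, ht ▸ subset_closure (by simp), ht ▸ subset_closure (by simp)⟩

end IsFreeGroup

namespace FreeGroup

variable {α : Type*}

theorem mem_zpowers_of_of_commute {x : FreeGroup α} {s : α} (h : Commute x (of s)) :
    x ∈ zpowers (of s) := by
  obtain ⟨t, hx, hs⟩ := IsFreeGroup.exists_mem_zpowers_of_commute h
  obtain ⟨k, hk⟩ := mem_zpowers_iff.mp hs
  -- `of s` has total degree `1`, so `k = ±1` and `t` is in turn a power of `of s`.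
  let deg : FreeGroup α →* Multiplicative ℤ := FreeGroup.lift fun _ => Multiplicative.ofAdd 1
  have hdeg : k * (deg t).toAdd = 1 := by
    simpa [deg] using congrArg (fun w => (deg w).toAdd) hk
  have hkk : k * k = 1 := by
    rcases Int.eq_one_or_neg_one_of_mul_eq_one hdeg with rfl | rfl <;> rfl
  have ht : t ∈ zpowers (of s) :=
    mem_zpowers_iff.mpr ⟨k, by rw [← hk, ← zpow_mul, hkk, zpow_one]⟩
  exact zpowers_le.mpr ht hx

theorem center_eq_bot [Nontrivial α] : center (FreeGroup α) = ⊥ := by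
  classical
  obtain ⟨s, t, hst⟩ := exists_pair_ne α
  refine (eq_bot_iff_forall _).mpr fun x hx => ?_
  obtain ⟨m, rfl⟩ :=
    mem_zpowers_iff.mp (mem_zpowers_of_of_commute (mem_center_iff.mp hx (of s)).symm)
  obtain ⟨n, hn⟩ :=
    mem_zpowers_iff.mp (mem_zpowers_of_of_commute (mem_center_iff.mp hx (of t)).symm)
  let coord : FreeGroup α →* Multiplicative ℤ :=
    FreeGroup.lift fun a => if a = s then Multiplicative.ofAdd 1 else 1
  have hm : m = 0 := by
    simpa [coord, hst.symm] using (congrArg (fun w => (coord w).toAdd) hn).symm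
  rw [hm, zpow_zero]

end FreeGroup

section TorsionFree

variable {G : Type*} [Group G] [IsMulTorsionFree G]

theorem eq_one_of_conj_eq_inv {g u : G} (h : g * u * g⁻¹ = u⁻¹) : u = 1 := by
  have hug : u * g = g * u⁻¹ :=
    calc u * g = (g * u * g⁻¹)⁻¹ * g := by rw [h, inv_inv]
      _ = g * u⁻¹ := by group
  have hsq : (g * u) ^ 2 = g ^ 2 := by
    rw [sq, sq, mul_assoc, ← mul_assoc u, hug]
    group
  exact mul_eq_left.mp (pow_left_injective two_ne_zero hsq)

theorem mem_center_of_zpowers_normal {u : G} (hu : (zpowers u).Normal) : u ∈ center G := by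
  refine mem_center_iff.mpr fun g => ?_
  obtain ⟨n, hn⟩ := mem_zpowers_iff.mp (hu.conj_mem u (mem_zpowers u) g)
  obtain ⟨m, hm⟩ := mem_zpowers_iff.mp (hu.conj_mem u (mem_zpowers u) g⁻¹)
  by_cases hu1 : u = 1
  · rw [hu1, mul_one, one_mul]
  -- conjugating by `g` and back gives `u = u ^ (m * n)`, so `n = ±1`
  have hmn : u ^ (m * n - 1) = 1 := by
    rw [zpow_sub_one, zpow_mul, hm, conj_zpow, hn, mul_inv_eq_one]
    group
  rcases Int.eq_one_or_neg_one_of_mul_eq_one'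
    (sub_eq_zero.mp ((IsMulTorsionFree.zpow_eq_one_iff_right hu1).mp hmn)) with
    ⟨-, rfl⟩ | ⟨-, rfl⟩
  · rw [zpow_one] at hn
    exact mul_inv_eq_iff_eq_mul.mp hn.symm
  · exact absurd (eq_one_of_conj_eq_inv (hn.symm.trans (zpow_neg_one u))) hu1

end TorsionFree

theorem FreeGroup.eq_bot_of_normal_of_isSolvable {α : Type*} [Nontrivial α]
    (N : Subgroup (FreeGroup α)) [N.Normal] [Group.IsSolvable N] : N = ⊥ := by
  obtain ⟨u, rfl⟩ := IsFreeGroup.exists_zpowers_eq_of_isSolvable N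
  have hu := mem_center_of_zpowers_normal ‹(zpowers u).Normal›
  rw [FreeGroup.center_eq_bot, mem_bot] at hu
  rw [hu, zpowers_one_eq_bot]

theorem Subgroup.isSolvable_comap_of_injective {G H : Type*} [Group G] [Group H] {f : G →* H}
    (hf : Function.Injective f) (K : Subgroup H) [Group.IsSolvable K] :
    Group.IsSolvable (K.comap f) :=
  Group.isSolvable_of_isSolvable_injective (f := f.subgroupComap K)
    fun _ _ h => Subtype.ext (hf (congrArg Subtype.val h))

theorem MonoidHom.injective_comp_of_isSolvable_ker {α G H : Type*} [Nontrivial α] [Group G]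
    [Group H] (f : G →* H) [Group.IsSolvable f.ker] {ι : FreeGroup α →* G}
    (hι : Function.Injective ι) : Function.Injective (f.comp ι) := by
  have : Group.IsSolvable (f.comp ι).ker := by
    rw [← MonoidHom.comap_ker]
    exact f.ker.isSolvable_comap_of_injective hι
  exact (MonoidHom.ker_eq_bot_iff _).mp (FreeGroup.eq_bot_of_normal_of_isSolvable _)

/-- If `f : H →* G` is a surjective group homomorphism with solvable kernel, then
`H` contains a nonabelian free subgroup if and only if `G` does. -/
theorem nonabelian_free_subgroup_iff_of_surjective_solvable_kernel
    {H G : Type*} [Group H] [Group G] (f : H →* G)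
    (hf : Function.Surjective f) (hker : IsSolvable f.ker) :
    (∃ x y : H, Function.Injective (FreeGroup.lift ![x, y] : FreeGroup (Fin 2) →* H)) ↔
      (∃ x y : G, Function.Injective (FreeGroup.lift ![x, y] : FreeGroup (Fin 2) →* G)) := by
  have : Group.IsSolvable f.ker := hker
  have lift_map : ∀ x y : H, FreeGroup.lift ![f x, f y] = f.comp (FreeGroup.lift ![x, y]) :=
    fun x y => FreeGroup.ext_hom _ _ fun i => by fin_cases i <;> simp
  constructor
  · rintro ⟨x, y, hxy⟩
    exact ⟨f x, f y, lift_map x y ▸ f.injective_comp_of_isSolvable_ker hxy⟩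
  · rintro ⟨x', y', hxy⟩
    obtain ⟨x, rfl⟩ := hf x'
    obtain ⟨y, rfl⟩ := hf y'
    exact ⟨x, y, Function.Injective.of_comp (lift_map x y ▸ hxy)⟩
end
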